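/- arXiv:2105.00179 — 3 statements merged into one kernel-verified Lean document; each statement's English description precedes it below -/
import Mathlib

section
/- Let D be a set with {0, e₁, e₂, e₃, e₄} ⊆ D ⊆ {x ∈ ℝ⁴ : ‖x‖ ≤ d} for some real d ≥ 1, and let f : D → ℝ⁴ satisfy f(0) = 0 and |‖f(x) − f(y)‖ − ‖x − y‖| ≤ ε for all x, y ∈ D, where 0 < ε < 1/90. Then there exists an isometry U : D → ℝ⁴ such that ‖f(x) − U(x)‖ ≤ √(1076·d² + 2376·d + 1316) · ε < (33·d + 37)·ε for all x ∈ D. -/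
/-!
The images `f eᵢ` of the standard basis have norms within `ε` of `1`, and by polarization
(inner products are determined by norms) their pairwise inner products are at most `3.44 ε`.
Gram–Schmidt moves such a family by at most `14 ε` to an orthonormal basis `uᵢ`, and `U` is the
linear isometry sending `eᵢ` to `uᵢ`. Polarization again shows that the coordinate `⟪uᵢ, f x⟫`
is within `(16 d + 2.2) ε` of `xᵢ`, so by Parseval `‖f x - U x‖ ≤ 2 (16 d + 2.2) ε`, which is
below the stated bound.
-/

open scoped RealInnerProductSpace

lemma abs_sq_sub_sq_le {s t ε : ℝ} (hs : 0 ≤ s) (ht : 0 ≤ t) (h : |s - t| ≤ ε) :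
    |s ^ 2 - t ^ 2| ≤ (2 * t + ε) * ε := by
  have hst : |s + t| ≤ 2 * t + ε := by
    rw [abs_of_nonneg (by positivity)]
    linarith [(abs_le.mp h).2]
  rw [show s ^ 2 - t ^ 2 = (s + t) * (s - t) by ring, abs_mul]
  exact mul_le_mul hst h (abs_nonneg _) ((abs_nonneg _).trans hst)

variable {E F : Type*} [NormedAddCommGroup E] [NormedAddCommGroup F]

lemma abs_norm_map_sub_norm_le {D : Set E} {f : E → F} {ε : ℝ} (h0 : 0 ∈ D) (hf0 : f 0 = 0)
    (hf : ∀ x ∈ D, ∀ y ∈ D, |‖f x - f y‖ - ‖x - y‖| ≤ ε) {x : E} (hx : x ∈ D) :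
    |‖f x‖ - ‖x‖| ≤ ε := by
  simpa [hf0] using hf x hx 0 h0

variable [InnerProductSpace ℝ E] [InnerProductSpace ℝ F]

lemma abs_inner_sub_inner_le {a b : E} {a' b' : F} {ε : ℝ}
    (ha : |‖a‖ - ‖a'‖| ≤ ε) (hb : |‖b‖ - ‖b'‖| ≤ ε) (hab : |‖a - b‖ - ‖a' - b'‖| ≤ ε) :
    |⟪a, b⟫ - ⟪a', b'⟫| ≤ (‖a'‖ + ‖b'‖ + ‖a' - b'‖ + 3 / 2 * ε) * ε := by
  have h₁ := abs_sq_sub_sq_le (norm_nonneg _) (norm_nonneg _) ha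
  have h₂ := abs_sq_sub_sq_le (norm_nonneg _) (norm_nonneg _) hb
  have h₃ := abs_sq_sub_sq_le (norm_nonneg _) (norm_nonneg _) hab
  rw [norm_sub_sq_real a b, norm_sub_sq_real a' b'] at h₃
  rw [abs_le] at h₁ h₂ h₃ ⊢
  constructor <;> linarith

lemma Orthonormal.norm_sub_sq {ι : Type*} {v : ι → E} (hv : Orthonormal ℝ v) {i j : ι}
    (hij : i ≠ j) :
    ‖v i - v j‖ ^ 2 = 2 := by
  rw [norm_sub_sq_real, hv.inner_eq_zero hij, hv.norm_eq_one, hv.norm_eq_one]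
  norm_num

section NearIsometry

variable {D : Set E} {f : E → F} {ε : ℝ}

lemma abs_inner_map_sub_inner_le (h0 : 0 ∈ D) (hf0 : f 0 = 0)
    (hf : ∀ x ∈ D, ∀ y ∈ D, |‖f x - f y‖ - ‖x - y‖| ≤ ε) {x y : E} (hx : x ∈ D) (hy : y ∈ D) :
    |⟪f x, f y⟫ - ⟪x, y⟫| ≤ (‖x‖ + ‖y‖ + ‖x - y‖ + 3 / 2 * ε) * ε :=
  abs_inner_sub_inner_le (abs_norm_map_sub_norm_le h0 hf0 hf hx)
    (abs_norm_map_sub_norm_le h0 hf0 hf hy) (hf x hx y hy)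

lemma abs_inner_map_orthonormal_le (h0 : 0 ∈ D) (hf0 : f 0 = 0)
    (hf : ∀ x ∈ D, ∀ y ∈ D, |‖f x - f y‖ - ‖x - y‖| ≤ ε) (hε : ε ≤ 1 / 90)
    {ι : Type*} {e : ι → E} (he : Orthonormal ℝ e) (heD : ∀ i, e i ∈ D) {i j : ι} (hij : i ≠ j) :
    |⟪f (e i), f (e j)⟫| ≤ 3.44 * ε := by
  have hε0 : 0 ≤ ε := (abs_nonneg _).trans (hf 0 h0 0 h0)
  have h := abs_inner_map_sub_inner_le h0 hf0 hf (heD i) (heD j)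
  rw [he.inner_eq_zero hij, sub_zero, he.norm_eq_one, he.norm_eq_one] at h
  have hij' : ‖e i - e j‖ ≤ 1.415 :=
    le_of_sq_le_sq (by rw [he.norm_sub_sq hij]; norm_num) (by norm_num)
  nlinarith

lemma abs_inner_map_sub_inner_le_of_norm_sub_le (h0 : 0 ∈ D) (hf0 : f 0 = 0)
    (hf : ∀ x ∈ D, ∀ y ∈ D, |‖f x - f y‖ - ‖x - y‖| ≤ ε) (hε : ε ≤ 1 / 90) {d : ℝ}
    (hD : ∀ x ∈ D, ‖x‖ ≤ d) {b : E} (hb : b ∈ D) (hb1 : ‖b‖ = 1) {u : F}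
    (hu : ‖u - f b‖ ≤ 14 * ε) {x : E} (hx : x ∈ D) :
    |⟪u, f x⟫ - ⟪b, x⟫| ≤ (16 * d + 2.2) * ε := by
  have hε0 : 0 ≤ ε := (abs_nonneg _).trans (hf 0 h0 0 h0)
  have hxd := hD x hx
  have hbx : ‖b - x‖ ≤ 1 + d := (norm_sub_le _ _).trans (by linarith)
  have hfx : ‖f x‖ ≤ d + ε := by linarith [(abs_le.mp (abs_norm_map_sub_norm_le h0 hf0 hf hx)).2]
  have hfb := abs_inner_map_sub_inner_le h0 hf0 hf hb hx
  have hub : |⟪u - f b, f x⟫| ≤ 14 * ε * (d + ε) :=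
    (abs_real_inner_le_norm _ _).trans (mul_le_mul hu hfx (norm_nonneg _) (by positivity))
  rw [show ⟪u, f x⟫ - ⟪b, x⟫ = ⟪u - f b, f x⟫ + (⟪f b, f x⟫ - ⟪b, x⟫) by rw [inner_sub_left]; ring]
  refine (abs_add_le _ _).trans ?_
  rw [hb1] at hfb
  nlinarith [norm_nonneg x]

end NearIsometry

lemma norm_inv_norm_smul_sub_self {p : E} (hp : p ≠ 0) : ‖‖p‖⁻¹ • p - p‖ = |1 - ‖p‖| := by
  have hp' : ‖p‖ ≠ 0 := norm_ne_zero_iff.mpr hp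
  calc ‖‖p‖⁻¹ • p - p‖ = ‖(‖p‖⁻¹ - 1) • p‖ := by rw [sub_smul, one_smul]
    _ = |(‖p‖⁻¹ - 1) * ‖p‖| := by rw [norm_smul, Real.norm_eq_abs, abs_mul, abs_norm]
    _ = |1 - ‖p‖| := by rw [sub_one_mul, inv_mul_cancel₀ hp']

lemma abs_sum_mul_le {ι : Type*} [Fintype ι] {c c' : ι → ℝ} {δ : ℝ} (hc : ∀ j, |c j| ≤ δ)
    (hc' : ∀ j, |c' j| ≤ δ) : |∑ j, c j * c' j| ≤ Fintype.card ι * δ ^ 2 :=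
  calc |∑ j, c j * c' j| ≤ ∑ j, |c j * c' j| := Finset.abs_sum_le_sum_abs _ _
    _ ≤ ∑ _j : ι, δ ^ 2 := Finset.sum_le_sum fun j _ => by
        rw [abs_mul, sq]
        exact mul_le_mul (hc j) (hc' j) (abs_nonneg _) ((abs_nonneg _).trans (hc j))
    _ = Fintype.card ι * δ ^ 2 := by simp

section GramSchmidt

variable {ι : Type*} [Fintype ι] {w : ι → E}

lemma Orthonormal.inner_sub_sum_inner_smul (hw : Orthonormal ℝ w) (x : E) (i : ι) :
    ⟪w i, x - ∑ j, ⟪w j, x⟫ • w j⟫ = 0 := by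
  rw [inner_sub_right, hw.inner_right_fintype, sub_self]

lemma Orthonormal.norm_sum_inner_smul_sq (hw : Orthonormal ℝ w) (x : E) :
    ‖∑ j, ⟪w j, x⟫ • w j‖ ^ 2 = ∑ j, ⟪w j, x⟫ ^ 2 := by
  rw [← real_inner_self_eq_norm_sq, hw.inner_sum]
  simp [sq]

lemma Orthonormal.exists_orthogonal_near (hw : Orthonormal ℝ w) (hι : Fintype.card ι ≤ 3)
    {ε : ℝ} (hε : ε ≤ 1 / 90) {x : E} (hx : |‖x‖ - 1| ≤ ε) (hxw : ∀ j, |⟪w j, x⟫| ≤ 4.1 * ε) :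
    ∃ p : E, (∀ j, ⟪w j, p⟫ = 0) ∧ |‖p‖ - 1| ≤ ε + 26 * ε ^ 2 ∧ ‖x - p‖ ≤ 7.2 * ε ∧
      ∀ y : E, (∀ j, |⟪w j, y⟫| ≤ 4.1 * ε) → |⟪p, y⟫ - ⟪x, y⟫| ≤ 50.43 * ε ^ 2 := by
  have hε0 : 0 ≤ ε := (abs_nonneg _).trans hx
  have hcard : (Fintype.card ι : ℝ) ≤ 3 := by exact_mod_cast hι
  have hsum : ∀ y : E, (∀ j, |⟪w j, y⟫| ≤ 4.1 * ε) →
      |∑ j, ⟪w j, x⟫ * ⟪w j, y⟫| ≤ 50.43 * ε ^ 2 := fun y hy =>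
    (abs_sum_mul_le hxw hy).trans (by nlinarith)
  set a := ∑ j, ⟪w j, x⟫ • w j
  have hpw := hw.inner_sub_sum_inner_smul x
  have ha : ‖a‖ ^ 2 ≤ 50.43 * ε ^ 2 := by
    rw [hw.norm_sum_inner_smul_sq]
    simpa [sq] using (le_abs_self _).trans (hsum x hxw)
  have hpa : ‖x‖ ^ 2 = ‖x - a‖ ^ 2 + ‖a‖ ^ 2 := by
    have hperp : ⟪x - a, a⟫ = 0 := by
      rw [real_inner_comm, sum_inner]
      exact Finset.sum_eq_zero fun j _ => by rw [real_inner_smul_left, hpw, mul_zero]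
    rw [← sub_add_cancel x a, norm_add_sq_real, hperp, add_sub_cancel_right]
    ring
  have hx' := abs_le.mp hx
  refine ⟨x - a, hpw, abs_le.mpr ⟨?_, ?_⟩, ?_, fun y hy => ?_⟩
  · have h1 : (1 - ε) ^ 2 ≤ ‖x‖ ^ 2 := pow_le_pow_left₀ (by linarith) (by linarith) 2
    have h2 : (1 - ε - 26 * ε ^ 2) ^ 2 ≤ (1 - ε) ^ 2 - 50.43 * ε ^ 2 := by
      have := mul_nonneg (pow_nonneg hε0 2) (sub_nonneg.2 hε)
      have := mul_nonneg (pow_nonneg hε0 3) (sub_nonneg.2 hε)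
      nlinarith
    have : (1 - ε - 26 * ε ^ 2) ^ 2 ≤ ‖x - a‖ ^ 2 := by linarith
    linarith [le_of_sq_le_sq this (norm_nonneg _)]
  · have : ‖x - a‖ ^ 2 ≤ (1 + ε) ^ 2 := by nlinarith [norm_nonneg x]
    nlinarith [le_of_sq_le_sq this (by linarith)]
  · rw [sub_sub_cancel]
    exact le_of_sq_le_sq (by nlinarith) (by positivity)
  · have : ⟪x - a, y⟫ - ⟪x, y⟫ = -∑ j, ⟪w j, x⟫ * ⟪w j, y⟫ := by
      simp [a, inner_sub_left, sum_inner, real_inner_smul_left]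
    rw [this, abs_neg]
    exact hsum y hy

/-- The constant `3.44` exceeds `2 + √2 + 3 / 2 * (1 / 90)`, the bound that
`abs_inner_map_orthonormal_le` gives for images of orthonormal vectors. -/
lemma Orthonormal.exists_unit_orthogonal_near (hw : Orthonormal ℝ w) (hι : Fintype.card ι ≤ 3)
    {ε : ℝ} (hε : ε ≤ 1 / 90) {x : E} (hx : |‖x‖ - 1| ≤ ε) (hxw : ∀ j, |⟪w j, x⟫| ≤ 4.1 * ε) :
    ∃ q : E, ‖q‖ = 1 ∧ (∀ j, ⟪w j, q⟫ = 0) ∧ ‖q - x‖ ≤ 14 * ε ∧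
      ∀ y : E, |⟪x, y⟫| ≤ 3.44 * ε → (∀ j, |⟪w j, y⟫| ≤ 4.1 * ε) → |⟪q, y⟫| ≤ 4.1 * ε := by
  have hε0 : 0 ≤ ε := (abs_nonneg _).trans hx
  obtain ⟨p, hpw, hp, hxp, hpy⟩ := hw.exists_orthogonal_near hι hε hx hxw
  have hp' := abs_le.mp hp
  have hp0 : 0 < ‖p‖ := by nlinarith
  refine ⟨‖p‖⁻¹ • p, norm_smul_inv_norm (norm_pos_iff.mp hp0),
    fun j => by rw [real_inner_smul_right, hpw j, mul_zero], ?_, fun y hxy hwy => ?_⟩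
  · calc ‖‖p‖⁻¹ • p - x‖ ≤ ‖‖p‖⁻¹ • p - p‖ + ‖p - x‖ := norm_sub_le_norm_sub_add_norm_sub _ _ _
      _ = |‖p‖ - 1| + ‖x - p‖ := by
          rw [norm_inv_norm_smul_sub_self (norm_pos_iff.mp hp0), abs_sub_comm, norm_sub_rev]
      _ ≤ 14 * ε := by nlinarith
  · have hpy' := abs_le.mp (hpy y hwy)
    have hxy' := abs_le.mp hxy
    rw [real_inner_smul_left, abs_mul, abs_inv, abs_norm, inv_mul_le_iff₀ hp0, abs_le]
    constructor <;> nlinarith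

end GramSchmidt

/-- The last conclusion is the invariant that keeps Gram–Schmidt going: each vector still to be
processed is such a `y`. -/
theorem exists_orthonormal_near {n : ℕ} (hn : n ≤ 4) {ε : ℝ} (hε : ε ≤ 1 / 90) (v : Fin n → E)
    (hv : ∀ i, |‖v i‖ - 1| ≤ ε) (hvv : Pairwise fun i j => |⟪v i, v j⟫| ≤ 3.44 * ε) :
    ∃ u : Fin n → E, Orthonormal ℝ u ∧ (∀ i, ‖u i - v i‖ ≤ 14 * ε) ∧
      ∀ y : E, (∀ i, |⟪v i, y⟫| ≤ 3.44 * ε) → ∀ i, |⟪u i, y⟫| ≤ 4.1 * ε := by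
  induction n with
  | zero => exact ⟨v, .of_isEmpty v, finZeroElim, fun _ _ => finZeroElim⟩
  | succ n ih =>
    obtain ⟨u, hu, huv, huy⟩ := ih (by omega) (Fin.tail v) (fun i => hv i.succ)
      fun i j hij => hvv ((Fin.succ_injective n).ne hij)
    obtain ⟨q, hq, hqu, hqv, hqy⟩ := hu.exists_unit_orthogonal_near
      (by simp only [Fintype.card_fin]; omega) hε (hv 0)
      (huy (v 0) fun i => hvv (Fin.succ_ne_zero i))
    have hqu' : ∀ j, ⟪q, u j⟫ = 0 := fun j => (real_inner_comm _ _).trans (hqu j)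
    refine ⟨Matrix.vecCons q u, orthonormal_vecCons_iff.mpr ⟨hq, hqu', hu⟩,
      Fin.forall_fin_succ.mpr ⟨hqv, huv⟩, fun y hy => ?_⟩
    have hty := huy y fun i => hy i.succ
    exact Fin.forall_fin_succ.mpr ⟨hqy y (hy 0) hty, hty⟩

lemma OrthonormalBasis.norm_sub_repr_symm_le {ι : Type*} [Fintype ι] (B : OrthonormalBasis ι ℝ E)
    (y : E) (z : EuclideanSpace ℝ ι) {δ : ℝ} (hδ : 0 ≤ δ) (h : ∀ i, |⟪B i, y⟫ - z i| ≤ δ) :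
    ‖y - B.repr.symm z‖ ≤ √(Fintype.card ι) * δ := by
  have hrepr : ‖y - B.repr.symm z‖ = ‖B.repr y - z‖ := by
    rw [← B.repr.norm_map, map_sub, LinearIsometryEquiv.apply_symm_apply]
  rw [hrepr, EuclideanSpace.norm_eq, ← Real.sqrt_sq hδ, ← Real.sqrt_mul (Nat.cast_nonneg _)]
  refine Real.sqrt_le_sqrt ?_
  calc ∑ i, ‖(B.repr y - z) i‖ ^ 2 ≤ ∑ _i : ι, δ ^ 2 := Finset.sum_le_sum fun i _ => by
        rw [PiLp.sub_apply, B.repr_apply_apply, Real.norm_eq_abs]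
        exact pow_le_pow_left₀ (abs_nonneg _) (h i) 2
    _ = Fintype.card ι * δ ^ 2 := by simp

theorem stability_dim_four_general (d : ℝ) (ε : ℝ) (hε0 : 0 < ε) (hε : ε < 1 / 90)
    (D : Set (EuclideanSpace ℝ (Fin 4)))
    (h0D : (0 : EuclideanSpace ℝ (Fin 4)) ∈ D)
    (heD : ∀ i : Fin 4, EuclideanSpace.single i (1 : ℝ) ∈ D)
    (hDd : D ⊆ {x : EuclideanSpace ℝ (Fin 4) | ‖x‖ ≤ d})
    (f : EuclideanSpace ℝ (Fin 4) → EuclideanSpace ℝ (Fin 4))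
    (hf0 : f 0 = 0)
    (hiso : ∀ x ∈ D, ∀ y ∈ D, |‖f x - f y‖ - ‖x - y‖| ≤ ε) :
    (∃ U : EuclideanSpace ℝ (Fin 4) → EuclideanSpace ℝ (Fin 4),
      (∀ x ∈ D, ∀ y ∈ D, ‖U x - U y‖ = ‖x - y‖) ∧
      ∀ x ∈ D, ‖f x - U x‖ ≤ Real.sqrt (1076 * d ^ 2 + 2376 * d + 1316) * ε) ∧
    Real.sqrt (1076 * d ^ 2 + 2376 * d + 1316) * ε < (33 * d + 37) * ε := by
  have hD : ∀ x ∈ D, ‖x‖ ≤ d := fun x hx => hDd hx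
  have hd : 0 ≤ d := (norm_nonneg _).trans (hD 0 h0D)
  set e := EuclideanSpace.basisFun (Fin 4) ℝ
  have he : ∀ i, e i ∈ D := fun i => by simpa [e] using heD i
  obtain ⟨u, hu, hue, -⟩ := exists_orthonormal_near le_rfl hε.le (fun i => f (e i))
    (fun i => by simpa using abs_norm_map_sub_norm_le h0D hf0 hiso (he i))
    (fun i j hij => abs_inner_map_orthonormal_le h0D hf0 hiso hε.le e.orthonormal he hij)
  let B : OrthonormalBasis (Fin 4) ℝ (EuclideanSpace ℝ (Fin 4)) :=
    .mk hu (hu.linearIndependent.span_eq_top_of_card_eq_finrank' (by simp)).ge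
  have hcoord : ∀ x ∈ D, ∀ i, |⟪B i, f x⟫ - x i| ≤ (16 * d + 2.2) * ε := fun x hx i => by
    simpa [B, e, EuclideanSpace.inner_single_left] using
      abs_inner_map_sub_inner_le_of_norm_sub_le h0D hf0 hiso hε.le hD (he i)
      (e.orthonormal.norm_eq_one i) (hue i) hx
  have hC : 2 * (16 * d + 2.2) ≤ √(1076 * d ^ 2 + 2376 * d + 1316) :=
    Real.le_sqrt_of_sq_le (by nlinarith)
  refine ⟨⟨B.repr.symm, fun x _ y _ => by rw [← map_sub, LinearIsometryEquiv.norm_map],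
    fun x hx => ?_⟩, ?_⟩
  · calc ‖f x - B.repr.symm x‖ ≤ √4 * ((16 * d + 2.2) * ε) := by
          simpa using B.norm_sub_repr_symm_le (f x) x (by positivity) (hcoord x hx)
      _ ≤ √(1076 * d ^ 2 + 2376 * d + 1316) * ε := by
          rw [show (4 : ℝ) = 2 ^ 2 by norm_num, Real.sqrt_sq zero_le_two]
          nlinarith
  · exact mul_lt_mul_of_pos_right ((Real.sqrt_lt' (by positivity)).mpr (by nlinarith)) hε0

/-- Example 5.3: stability of isometries on bounded subsets of `ℝ⁴`. -/
theorem stability_dim_four (d : ℝ) (hd : 1 ≤ d) (ε : ℝ) (hε0 : 0 < ε) (hε : ε < 1 / 90)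
    (D : Set (EuclideanSpace ℝ (Fin 4)))
    (h0D : (0 : EuclideanSpace ℝ (Fin 4)) ∈ D)
    (heD : ∀ i : Fin 4, EuclideanSpace.single i (1 : ℝ) ∈ D)
    (hDd : D ⊆ {x : EuclideanSpace ℝ (Fin 4) | ‖x‖ ≤ d})
    (f : EuclideanSpace ℝ (Fin 4) → EuclideanSpace ℝ (Fin 4))
    (hf0 : f 0 = 0)
    (hiso : ∀ x ∈ D, ∀ y ∈ D, |‖f x - f y‖ - ‖x - y‖| ≤ ε) :
    (∃ U : EuclideanSpace ℝ (Fin 4) → EuclideanSpace ℝ (Fin 4),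
      (∀ x ∈ D, ∀ y ∈ D, ‖U x - U y‖ = ‖x - y‖) ∧
      ∀ x ∈ D, ‖f x - U x‖ ≤ Real.sqrt (1076 * d ^ 2 + 2376 * d + 1316) * ε) ∧
    Real.sqrt (1076 * d ^ 2 + 2376 * d + 1316) * ε < (33 * d + 37) * ε :=
  stability_dim_four_general d ε hε0 hε D h0D heD hDd f hf0 hiso
end

section
/- Let D be a set with {0, e₁, e₂, e₃, e₄, e₅} ⊆ D ⊆ {x ∈ ℝ⁵ : ‖x‖ ≤ d} for some real d ≥ 1, and let f : D → ℝ⁵ satisfy f(0) = 0 and |‖f(x) − f(y)‖ − ‖x − y‖| ≤ ε for all x, y ∈ D, where 0 < ε < 1/115. Then there exists an isometry U : D → ℝ⁵ such that ‖f(x) − U(x)‖ ≤ √(1976·d² + 4296·d + 2340) · ε < (45·d + 49)·ε for all x ∈ D. -/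
/-!
Put `v i = f (e i)`. Polarization turns the ε-isometry bounds into
`|⟪f x, f y⟫ - ⟪x, y⟫| = O(ε)`, so the `v i` are almost orthonormal. Gram–Schmidt then moves
each `v i` only by `O(ε)`: the removed part `P` is the projection of `v i` onto the span of the
earlier `v j`, and `‖P‖² = ⟪v i, P⟫` is small because `v i` is almost orthogonal to each `v j`
while the Gram matrix of the `v j` is close to the identity. The resulting orthonormal basis `b`
gives the isometry `U x = ∑ x i • b i`, and every coordinate `⟪b i, f x⟫ - x i` of `f x - U x`
is `O((1 + d) ε)`.
-/

open Finset InnerProductSpace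
open scoped RealInnerProductSpace

section AlmostOrthonormal

variable {E : Type*} [NormedAddCommGroup E] [InnerProductSpace ℝ E]

theorem mul_sum_sq_le_norm_sum_smul_sq {ι : Type*} {v : ι → E} {a δ : ℝ}
    (hv : ∀ i, a ≤ ‖v i‖ ^ 2) (hvv : ∀ i j, i ≠ j → |⟪v i, v j⟫| ≤ δ)
    (s : Finset ι) (c : ι → ℝ) :
    (a - (#s - 1) * δ) * ∑ i ∈ s, c i ^ 2 ≤ ‖∑ i ∈ s, c i • v i‖ ^ 2 := by
  classical
  have hexpand : ‖∑ i ∈ s, c i • v i‖ ^ 2 =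
      ∑ i ∈ s, (c i ^ 2 * ‖v i‖ ^ 2 + ∑ j ∈ s.erase i, c i * c j * ⟪v i, v j⟫) := by
    have hterm : ∀ i j, ⟪c i • v i, c j • v j⟫ = c i * c j * ⟪v i, v j⟫ := fun i j => by
      rw [real_inner_smul_left, real_inner_smul_right, mul_assoc]
    rw [← real_inner_self_eq_norm_sq, sum_inner]
    refine sum_congr rfl fun i hi => ?_
    rw [inner_sum, ← add_sum_erase _ _ hi, hterm, real_inner_self_eq_norm_sq]
    simp only [hterm]
    ring
  have hoff : ∀ i j, i ≠ j → -(δ / 2 * (c i ^ 2 + c j ^ 2)) ≤ c i * c j * ⟪v i, v j⟫ := by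
    intro i j hij
    have hamgm : 2 * (|c i| * |c j|) ≤ c i ^ 2 + c j ^ 2 := by
      simpa only [sq_abs, mul_assoc] using two_mul_le_add_sq |c i| |c j|
    refine neg_le_of_abs_le ?_
    rw [abs_mul, abs_mul]
    nlinarith [hvv i j hij, abs_nonneg ⟪v i, v j⟫,
      mul_nonneg (abs_nonneg (c i)) (abs_nonneg (c j))]
  have hcount : ∑ i ∈ s, ∑ j ∈ s.erase i, (c i ^ 2 + c j ^ 2) =
      2 * (#s - 1) * ∑ i ∈ s, c i ^ 2 := by
    rw [sum_congr rfl fun i hi => sum_erase_eq_sub (f := fun j => c i ^ 2 + c j ^ 2) hi]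
    simp only [sum_sub_distrib, sum_add_distrib, sum_const, nsmul_eq_mul, ← mul_sum]
    ring
  have hlower : ∑ i ∈ s, (a * c i ^ 2 - δ / 2 * ∑ j ∈ s.erase i, (c i ^ 2 + c j ^ 2)) ≤
      ‖∑ i ∈ s, c i • v i‖ ^ 2 := by
    rw [hexpand]
    refine sum_le_sum fun i hi => add_le_add (by nlinarith [hv i, sq_nonneg (c i)]) ?_
    rw [mul_sum, ← sum_neg_distrib]
    exact sum_le_sum fun j hj => hoff i j (ne_of_mem_erase hj).symm
  rw [sum_sub_distrib, ← mul_sum, ← mul_sum, hcount] at hlower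
  linarith

theorem mul_norm_sq_le_of_inner_eq_norm_sq {ι : Type*} {v : ι → E} {a δ : ℝ}
    (hv : ∀ i, a ≤ ‖v i‖ ^ 2) (hvv : ∀ i j, i ≠ j → |⟪v i, v j⟫| ≤ δ)
    {s : Finset ι} {i : ι} (hi : i ∉ s) (c : ι → ℝ)
    (hproj : ⟪v i, ∑ j ∈ s, c j • v j⟫ = ‖∑ j ∈ s, c j • v j‖ ^ 2) :
    (a - (#s - 1) * δ) * ‖∑ j ∈ s, c j • v j‖ ^ 2 ≤ #s * δ ^ 2 := by
  set P := ∑ j ∈ s, c j • v j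
  have hgram : (a - (#s - 1) * δ) * ∑ j ∈ s, c j ^ 2 ≤ ‖P‖ ^ 2 :=
    mul_sum_sq_le_norm_sum_smul_sq hv hvv s c
  have hinner : |⟪v i, P⟫| ≤ δ * ∑ j ∈ s, |c j| := by
    rw [inner_sum, mul_sum]
    refine (abs_sum_le_sum_abs _ _).trans (sum_le_sum fun j hj => ?_)
    rw [real_inner_smul_right, abs_mul, mul_comm]
    exact mul_le_mul_of_nonneg_right (hvv i j (ne_of_mem_of_not_mem hj hi).symm) (abs_nonneg _)
  have hcs : (∑ j ∈ s, |c j|) ^ 2 ≤ #s * ∑ j ∈ s, c j ^ 2 := by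
    simpa only [sq_abs] using sq_sum_le_card_mul_sum_sq (s := s) (f := fun j => |c j|)
  have hP4 : (‖P‖ ^ 2) ^ 2 ≤ #s * δ ^ 2 * ∑ j ∈ s, c j ^ 2 := by
    rw [← hproj]
    nlinarith [sq_abs ⟪v i, P⟫, abs_nonneg ⟪v i, P⟫]
  have hk : 0 ≤ (#s : ℝ) * δ ^ 2 := by positivity
  rcases (sq_nonneg ‖P‖).eq_or_lt with hP0 | hP0
  · rw [← hP0, mul_zero]
    exact hk
  refine le_of_mul_le_mul_right ?_ hP0
  rcases le_or_gt (a - (#s - 1) * δ) 0 with hA | hA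
  · nlinarith
  · nlinarith [mul_le_mul_of_nonneg_left hgram hk]

theorem mul_norm_sub_gramSchmidt_sq_le {ι : Type*} [LinearOrder ι] [LocallyFiniteOrderBot ι]
    [WellFoundedLT ι] {v : ι → E} {a δ : ℝ}
    (hv : ∀ i, a ≤ ‖v i‖ ^ 2) (hvv : ∀ i j, i ≠ j → |⟪v i, v j⟫| ≤ δ) (i : ι) :
    (a - (#(Iio i) - 1) * δ) * ‖v i - gramSchmidt ℝ v i‖ ^ 2 ≤ #(Iio i) * δ ^ 2 := by
  have hspan : v i - gramSchmidt ℝ v i ∈ Submodule.span ℝ (v '' ↑(Iio i)) := by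
    rw [gramSchmidt_def ℝ v i, sub_sub_cancel, coe_Iio, ← span_gramSchmidt_Iio]
    refine Submodule.sum_mem _ fun k hk => Submodule.span_mono ?_
      (Submodule.starProjection_apply_mem _ _)
    exact Set.singleton_subset_iff.mpr (Set.mem_image_of_mem _ (mem_Iio.mp hk))
  obtain ⟨c, hc⟩ := (Submodule.mem_span_image_finset_iff_exists_fun' ℝ).mp hspan
  have horth : ⟪gramSchmidt ℝ v i, v i - gramSchmidt ℝ v i⟫ = 0 := by
    rw [← hc, inner_sum]
    refine sum_eq_zero fun j hj => ?_
    rw [real_inner_smul_right, gramSchmidt_inv_triangular ℝ v (mem_Iio.mp hj), mul_zero]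
  rw [← hc]
  refine mul_norm_sq_le_of_inner_eq_norm_sq hv hvv notMem_Iio_self c ?_
  rw [hc, ← real_inner_self_eq_norm_sq]
  nth_rw 1 [← sub_add_cancel (v i) (gramSchmidt ℝ v i)]
  rw [inner_add_left, horth, add_zero]

theorem norm_inv_norm_smul_sub_le (v w : E) : ‖‖w‖⁻¹ • w - v‖ ≤ |‖v‖ - 1| + 2 * ‖w - v‖ := by
  have hnormalize : ‖‖w‖⁻¹ • w - w‖ ≤ |1 - ‖w‖| := by
    rcases eq_or_ne w 0 with rfl | hw
    · simp
    refine le_of_eq ?_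
    calc ‖‖w‖⁻¹ • w - w‖ = ‖(‖w‖⁻¹ - 1) • w‖ := by rw [sub_smul, one_smul]
      _ = |(‖w‖⁻¹ - 1) * ‖w‖| := by rw [norm_smul, Real.norm_eq_abs, abs_mul, abs_norm]

      _ = |1 - ‖w‖| := by rw [sub_mul, inv_mul_cancel₀ (norm_ne_zero_iff.mpr hw), one_mul]
  have hw := abs_norm_sub_norm_le w v
  calc ‖‖w‖⁻¹ • w - v‖ ≤ ‖‖w‖⁻¹ • w - w‖ + ‖w - v‖ := norm_sub_le_norm_sub_add_norm_sub _ _ _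
    _ ≤ |‖v‖ - 1| + 2 * ‖w - v‖ := by
      rw [abs_sub_comm] at hnormalize
      linarith [abs_sub_le ‖w‖ ‖v‖ 1]

theorem norm_sub_repr_symm_sq_le {ι : Type*} [Fintype ι] (b : OrthonormalBasis ι ℝ E) {y : E}
    {x : EuclideanSpace ℝ ι} {r : ℝ} (h : ∀ i, |⟪b i, y⟫ - x i| ≤ r) :
    ‖y - b.repr.symm x‖ ^ 2 ≤ Fintype.card ι * r ^ 2 := by
  rw [← b.repr.norm_map, map_sub, LinearIsometryEquiv.apply_symm_apply,
    EuclideanSpace.real_norm_sq_eq, ← nsmul_eq_mul, ← card_univ, ← sum_const]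
  refine sum_le_sum fun i _ => ?_
  rw [PiLp.sub_apply, b.repr_apply_apply, ← sq_abs]
  exact pow_le_pow_left₀ (abs_nonneg _) (h i) 2

theorem exists_orthonormalBasis_norm_sub_le [FiniteDimensional ℝ E] (hE : Module.finrank ℝ E = 5)
    {ε : ℝ} (hε0 : 0 ≤ ε) (hε : ε ≤ 1 / 115) {v : Fin 5 → E} (hv : ∀ i, |‖v i‖ - 1| ≤ ε)
    (hvv : ∀ i j, i ≠ j → |⟪v i, v j⟫| ≤ 3.45 * ε) :
    ∃ b : OrthonormalBasis (Fin 5) ℝ E, ∀ i, ‖b i - v i‖ ≤ 17.62 * ε := by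
  have hv_sq : ∀ i, (1 - ε) ^ 2 ≤ ‖v i‖ ^ 2 := fun i => by
    have := abs_le.mp (hv i)
    nlinarith
  have hgs : ∀ i, ‖v i - gramSchmidt ℝ v i‖ ≤ 8.31 * ε := by
    intro i
    have hgram := mul_norm_sub_gramSchmidt_sq_le hv_sq hvv i
    have hk : (#(Iio i) : ℝ) ≤ 5 := by exact_mod_cast (card_le_univ _).trans_eq (Fintype.card_fin 5)
    -- `8.31 ^ 2 > 5 * 3.45 ^ 2 / 0.8626`; below, `17.62 = 1 + 2 * 8.31`
    have hA : 0.8626 ≤ (1 - ε) ^ 2 - (#(Iio i) - 1) * (3.45 * ε) := by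
      nlinarith [mul_le_mul_of_nonneg_right hk hε0]
    have hsq : ‖v i - gramSchmidt ℝ v i‖ ^ 2 ≤ (8.31 * ε) ^ 2 := by
      nlinarith [mul_le_mul_of_nonneg_right hA (sq_nonneg ‖v i - gramSchmidt ℝ v i‖),
        mul_le_mul_of_nonneg_right hk (sq_nonneg (3.45 * ε))]
    exact (pow_le_pow_iff_left₀ (norm_nonneg _) (by positivity) two_ne_zero).mp hsq
  have hnormed : ∀ i, ‖gramSchmidtNormed ℝ v i - v i‖ ≤ 17.62 * ε := fun i => by
    have := norm_inv_norm_smul_sub_le (v i) (gramSchmidt ℝ v i)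
    rw [norm_sub_rev (gramSchmidt ℝ v i)] at this
    simp only [gramSchmidtNormed, RCLike.ofReal_real_eq_id, id]
    linarith [hv i, hgs i]
  have hne : ∀ i, gramSchmidtNormed ℝ v i ≠ 0 := fun i h => by
    have := hnormed i
    rw [h, zero_sub, norm_neg] at this
    linarith [abs_le.mp (hv i)]
  refine ⟨gramSchmidtOrthonormalBasis (hE.trans (Fintype.card_fin 5).symm) v, fun i => ?_⟩
  rw [gramSchmidtOrthonormalBasis_apply _ (hne i)]
  exact hnormed i

end AlmostOrthonormal

theorem abs_sq_sub_sq_le_s7 {a b c : ℝ} (hb : 0 ≤ b) (h : |a - b| ≤ c) :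
    |a ^ 2 - b ^ 2| ≤ c * (2 * b + c) := by
  have hc : 0 ≤ c := (abs_nonneg _).trans h
  rw [abs_le] at h ⊢
  constructor <;> nlinarith

def IsApproxIsometryOn {E F : Type*} [NormedAddCommGroup E] [NormedAddCommGroup F] (ε : ℝ)
    (f : E → F) (D : Set E) : Prop :=
  ∀ x ∈ D, ∀ y ∈ D, |‖f x - f y‖ - ‖x - y‖| ≤ ε

namespace IsApproxIsometryOn

variable {E F : Type*} [NormedAddCommGroup E] [NormedAddCommGroup F] {ε : ℝ} {f : E → F}
  {D : Set E} {x y : E}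

theorem abs_norm_apply_sub_norm_le (hf : IsApproxIsometryOn ε f D) (h0 : 0 ∈ D) (hf0 : f 0 = 0)
    (hx : x ∈ D) : |‖f x‖ - ‖x‖| ≤ ε := by
  simpa only [hf0, sub_zero] using hf x hx 0 h0

variable [InnerProductSpace ℝ E] [InnerProductSpace ℝ F]

theorem abs_inner_apply_sub_inner_le (hf : IsApproxIsometryOn ε f D) (h0 : 0 ∈ D)
    (hf0 : f 0 = 0) (hx : x ∈ D) (hy : y ∈ D) :
    |⟪f x, f y⟫ - ⟪x, y⟫| ≤ ε * (‖x‖ + ‖y‖ + ‖x - y‖) + 3 / 2 * ε ^ 2 := by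
  have hx' := abs_sq_sub_sq_le_s7 (norm_nonneg _) (hf.abs_norm_apply_sub_norm_le h0 hf0 hx)
  have hy' := abs_sq_sub_sq_le_s7 (norm_nonneg _) (hf.abs_norm_apply_sub_norm_le h0 hf0 hy)
  have hxy' := abs_sq_sub_sq_le_s7 (norm_nonneg _) (hf x hx y hy)
  rw [norm_sub_sq_real, norm_sub_sq_real] at hxy'
  rw [abs_le] at hx' hy' hxy' ⊢
  constructor <;> nlinarith

theorem abs_inner_sub_inner_le_of_norm_sub_le (hf : IsApproxIsometryOn ε f D) (h0 : 0 ∈ D)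
    (hf0 : f 0 = 0) (hx : x ∈ D) (hy : y ∈ D) {u : F} {r : ℝ} (hu : ‖u - f y‖ ≤ r) :
    |⟪u, f x⟫ - ⟪y, x⟫| ≤ r * (‖x‖ + ε) + (ε * (‖y‖ + ‖x‖ + ‖y - x‖) + 3 / 2 * ε ^ 2) := by
  have hfx : ‖f x‖ ≤ ‖x‖ + ε := by
    linarith [(abs_le.mp (hf.abs_norm_apply_sub_norm_le h0 hf0 hx)).2]
  have hsplit : ⟪u, f x⟫ - ⟪y, x⟫ = ⟪u - f y, f x⟫ + (⟪f y, f x⟫ - ⟪y, x⟫) := by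
    rw [inner_sub_left]
    ring
  rw [hsplit]
  refine (abs_add_le _ _).trans (add_le_add ?_ (hf.abs_inner_apply_sub_inner_le h0 hf0 hy hx))
  exact (abs_real_inner_le_norm _ _).trans
    (mul_le_mul hu hfx (norm_nonneg _) ((norm_nonneg _).trans hu))

theorem abs_inner_apply_orthonormal_le (hf : IsApproxIsometryOn ε f D) (h0 : 0 ∈ D)
    (hf0 : f 0 = 0) {ι : Type*} {e : ι → E} (he : Orthonormal ℝ e) (heD : ∀ i, e i ∈ D) {i j : ι}
    (hij : i ≠ j) : |⟪f (e i), f (e j)⟫| ≤ ε * (2 + √2) + 3 / 2 * ε ^ 2 := by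
  have hsub : ‖e i - e j‖ = √2 := by
    rw [← Real.sqrt_sq (norm_nonneg _), norm_sub_sq_real, he.1 i, he.1 j, he.2 hij]
    norm_num
  have h := hf.abs_inner_apply_sub_inner_le h0 hf0 (heD i) (heD j)
  rwa [he.1 i, he.1 j, he.2 hij, hsub, sub_zero, one_add_one_eq_two] at h

theorem exists_orthonormalBasis_norm_sub_apply_le [FiniteDimensional ℝ F]
    (hF : Module.finrank ℝ F = 5) (hf : IsApproxIsometryOn ε f D) (h0 : 0 ∈ D) (hf0 : f 0 = 0)
    (hε0 : 0 ≤ ε) (hε : ε ≤ 1 / 115) {e : Fin 5 → E} (he : Orthonormal ℝ e)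
    (heD : ∀ i, e i ∈ D) :
    ∃ b : OrthonormalBasis (Fin 5) ℝ F, ∀ i, ‖b i - f (e i)‖ ≤ 17.62 * ε := by
  refine exists_orthonormalBasis_norm_sub_le hF hε0 hε (fun i => ?_) fun i j hij => ?_
  · simpa only [he.1 i] using hf.abs_norm_apply_sub_norm_le h0 hf0 (heD i)
  · have hsqrt2 : √2 ≤ 1.415 := (Real.sqrt_le_left (by norm_num)).mpr (by norm_num)
    nlinarith [hf.abs_inner_apply_orthonormal_le h0 hf0 he heD hij]

end IsApproxIsometryOn

theorem stability_dim_five_general (d : ℝ) (ε : ℝ) (hε0 : 0 < ε) (hε : ε < 1 / 115)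
    (D : Set (EuclideanSpace ℝ (Fin 5)))
    (h0D : (0 : EuclideanSpace ℝ (Fin 5)) ∈ D)
    (heD : ∀ i : Fin 5, EuclideanSpace.single i (1 : ℝ) ∈ D)
    (hDd : D ⊆ {x : EuclideanSpace ℝ (Fin 5) | ‖x‖ ≤ d})
    (f : EuclideanSpace ℝ (Fin 5) → EuclideanSpace ℝ (Fin 5))
    (hf0 : f 0 = 0)
    (hiso : ∀ x ∈ D, ∀ y ∈ D, |‖f x - f y‖ - ‖x - y‖| ≤ ε) :
    (∃ U : EuclideanSpace ℝ (Fin 5) → EuclideanSpace ℝ (Fin 5),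
      (∀ x ∈ D, ∀ y ∈ D, ‖U x - U y‖ = ‖x - y‖) ∧
      ∀ x ∈ D, ‖f x - U x‖ ≤ Real.sqrt (1976 * d ^ 2 + 4296 * d + 2340) * ε) ∧
    Real.sqrt (1976 * d ^ 2 + 4296 * d + 2340) * ε < (45 * d + 49) * ε := by
  have hf : IsApproxIsometryOn ε f D := hiso
  have hd : 0 ≤ d := by simpa using hDd h0D
  have he := EuclideanSpace.orthonormal_single (𝕜 := ℝ) (ι := Fin 5)
  obtain ⟨b, hb⟩ := hf.exists_orthonormalBasis_norm_sub_apply_le finrank_euclideanSpace_fin h0D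
    hf0 hε0.le hε.le he heD
  have hcoord : ∀ x ∈ D, ∀ i, |⟪b i, f x⟫ - x i| ≤ (19.62 * d + 2.17) * ε := by
    intro x hx i
    have h := hf.abs_inner_sub_inner_le_of_norm_sub_le h0D hf0 hx (heD i) (hb i)
    rw [EuclideanSpace.inner_single_left, map_one, one_mul, he.1 i] at h
    have hxd : ‖x‖ ≤ d := hDd hx
    have hxe : ‖EuclideanSpace.single i 1 - x‖ ≤ 1 + d :=
      (norm_sub_le _ _).trans (by rw [he.1 i]; linarith)
    nlinarith
  refine ⟨⟨b.repr.symm, fun x _ y _ => by rw [← map_sub, LinearIsometryEquiv.norm_map],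
    fun x hx => ?_⟩, ?_⟩
  · have h := norm_sub_repr_symm_sq_le b (hcoord x hx)
    rw [Fintype.card_fin, Nat.cast_ofNat] at h
    refine (pow_le_pow_iff_left₀ (norm_nonneg _) (by positivity) two_ne_zero).mp ?_
    rw [mul_pow, Real.sq_sqrt (by positivity)]
    nlinarith
  · exact mul_lt_mul_of_pos_right ((Real.sqrt_lt' (by positivity)).mpr (by nlinarith)) hε0

/-- Example 5.4: stability of isometries on bounded subsets of `ℝ⁵`. -/
theorem stability_dim_five (d : ℝ) (hd : 1 ≤ d) (ε : ℝ) (hε0 : 0 < ε) (hε : ε < 1 / 115)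
    (D : Set (EuclideanSpace ℝ (Fin 5)))
    (h0D : (0 : EuclideanSpace ℝ (Fin 5)) ∈ D)
    (heD : ∀ i : Fin 5, EuclideanSpace.single i (1 : ℝ) ∈ D)
    (hDd : D ⊆ {x : EuclideanSpace ℝ (Fin 5) | ‖x‖ ≤ d})
    (f : EuclideanSpace ℝ (Fin 5) → EuclideanSpace ℝ (Fin 5))
    (hf0 : f 0 = 0)
    (hiso : ∀ x ∈ D, ∀ y ∈ D, |‖f x - f y‖ - ‖x - y‖| ≤ ε) :
    (∃ U : EuclideanSpace ℝ (Fin 5) → EuclideanSpace ℝ (Fin 5),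
      (∀ x ∈ D, ∀ y ∈ D, ‖U x - U y‖ = ‖x - y‖) ∧
      ∀ x ∈ D, ‖f x - U x‖ ≤ Real.sqrt (1976 * d ^ 2 + 4296 * d + 2340) * ε) ∧
    Real.sqrt (1976 * d ^ 2 + 4296 * d + 2340) * ε < (45 * d + 49) * ε :=
  stability_dim_five_general d ε hε0 hε D h0D heD hDd f hf0 hiso
end

section
/- Let n ≥ 3 be an integer and 0 < ε < 1/12. Let f be a function defined on a subset of ℝⁿ containing {0, e₁, e₂, e₃} with f(0) = 0, satisfying |‖f(x) − f(y)‖ − ‖x − y‖| ≤ ε for all x, y ∈ {0, e₁, e₂, e₃}, and suppose f(e₁) = (e′₁₁, 0, …, 0), f(e₂) = (e′₂₁, e′₂₂, 0, …, 0), f(e₃) = (e′₃₁, e′₃₂, e′₃₃, 0, …, 0) with e′₁₁ ≥ 0, e′₂₂ ≥ 0, e′₃₃ ≥ 0. Then |e′₃₁| ≤ 4·ε, |e′₃₂| ≤ 6·ε, and 1 − 4·ε ≤ e′₃₃ ≤ 1 + ε. -/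
/-!
Polarization turns `‖f eᵢ‖ ≈ 1` and `‖f eᵢ - f eⱼ‖ ≈ √2` into `|⟪f eᵢ, f eⱼ⟫| ≤ 7ε/2`
(the exact bound is `(4 + 2√2)ε + ε²`). In the triangular coordinates these inner products are
`e′₁₁ e′₃₁` and `e′₂₁ e′₃₁ + e′₂₂ e′₃₂`; since the diagonal entries are close to `1`, dividing by
them bounds `e′₃₁` and then `e′₃₂`, and `e′₃₃` is pinned down by `‖f e₃‖² = e′₃₁² + e′₃₂² + e′₃₃²`.
-/

open Real
open scoped InnerProductSpace

lemma sq_mem_Icc_of_abs_sub_le {r t ε : ℝ} (hr : 0 ≤ r) (htε : ε ≤ t) (h : |r - t| ≤ ε) :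
    r ^ 2 ∈ Set.Icc ((t - ε) ^ 2) ((t + ε) ^ 2) := by
  rw [abs_sub_le_iff] at h
  exact ⟨pow_le_pow_left₀ (by linarith) (by linarith) 2, pow_le_pow_left₀ hr (by linarith) 2⟩

lemma sq_inner_self_mem_Icc_of_abs_norm_sub_one_le {E : Type*} [NormedAddCommGroup E]
    [InnerProductSpace ℝ E] {x : E} {ε : ℝ} (hε : ε ≤ 1) (hx : |‖x‖ - 1| ≤ ε) :
    ⟪x, x⟫_ℝ ∈ Set.Icc ((1 - ε) ^ 2) ((1 + ε) ^ 2) :=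
  real_inner_self_eq_norm_sq x ▸ sq_mem_Icc_of_abs_sub_le (norm_nonneg x) hε hx

lemma abs_real_inner_le_of_almost_orthonormal {E : Type*} [NormedAddCommGroup E]
    [InnerProductSpace ℝ E] {x y : E} {ε : ℝ} (hε0 : 0 ≤ ε) (hε : ε ≤ 1 / 8)
    (hx : |‖x‖ - 1| ≤ ε) (hy : |‖y‖ - 1| ≤ ε) (hxy : |‖x - y‖ - √2| ≤ ε) :
    |⟪x, y⟫_ℝ| ≤ 7 / 2 * ε := by
  have hs : √2 ^ 2 = 2 := sq_sqrt zero_le_two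
  have hs_lo : 1 ≤ √2 := by nlinarith [sqrt_nonneg 2]
  have hs_hi : √2 * ε ≤ 17 / 12 * ε := by
    have : √2 ≤ 17 / 12 := by nlinarith [sqrt_nonneg 2]
    exact mul_le_mul_of_nonneg_right this hε0
  have hεε : ε * ε ≤ ε / 8 := by nlinarith
  obtain ⟨hx₁, hx₂⟩ := sq_mem_Icc_of_abs_sub_le (norm_nonneg x) (by linarith) hx
  obtain ⟨hy₁, hy₂⟩ := sq_mem_Icc_of_abs_sub_le (norm_nonneg y) (by linarith) hy
  obtain ⟨hxy₁, hxy₂⟩ := sq_mem_Icc_of_abs_sub_le (norm_nonneg (x - y)) (by linarith) hxy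
  have hpol := norm_sub_sq_real x y
  rw [abs_le]
  ring_nf at hx₁ hx₂ hy₁ hy₂ hxy₁ hxy₂ hs_hi hεε hpol ⊢
  constructor <;> linarith [sq_nonneg ε]

lemma norm_sub_eq_sqrt_two_of_orthonormal {E : Type*} [NormedAddCommGroup E]
    [InnerProductSpace ℝ E] {ι : Type*} {e : ι → E} (he : Orthonormal ℝ e) {i j : ι}
    (hij : i ≠ j) : ‖e i - e j‖ = √2 := by
  rw [← sqrt_sq (norm_nonneg _), norm_sub_sq_real, he.1 i, he.1 j, he.2 hij]
  norm_num

section AlmostIsometry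

variable {E F : Type*} [NormedAddCommGroup E] [InnerProductSpace ℝ E] [NormedAddCommGroup F]
  {f : E → F} {S : Set E} {ε : ℝ} {ι : Type*} {e : ι → E}

lemma abs_norm_apply_sub_one_le (he : Orthonormal ℝ e) (hS0 : 0 ∈ S) (hf0 : f 0 = 0)
    (hf : ∀ x ∈ S, ∀ y ∈ S, |‖f x - f y‖ - ‖x - y‖| ≤ ε) {i : ι} (hi : e i ∈ S) :
    |‖f (e i)‖ - 1| ≤ ε := by
  simpa [hf0, he.1 i] using hf _ hi 0 hS0

variable [InnerProductSpace ℝ F]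

lemma abs_real_inner_apply_le (he : Orthonormal ℝ e) (hS0 : 0 ∈ S) (hf0 : f 0 = 0)
    (hf : ∀ x ∈ S, ∀ y ∈ S, |‖f x - f y‖ - ‖x - y‖| ≤ ε) (hε0 : 0 ≤ ε) (hε : ε ≤ 1 / 8)
    {i j : ι} (hij : i ≠ j) (hi : e i ∈ S) (hj : e j ∈ S) :
    |⟪f (e i), f (e j)⟫_ℝ| ≤ 7 / 2 * ε := by
  refine abs_real_inner_le_of_almost_orthonormal hε0 hε (abs_norm_apply_sub_one_le he hS0 hf0 hf hi)
    (abs_norm_apply_sub_one_le he hS0 hf0 hf hj) ?_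
  simpa [norm_sub_eq_sqrt_two_of_orthonormal he hij] using hf _ hi _ hj

end AlmostIsometry

lemma EuclideanSpace.inner_eq_sum_of_support_subset {ι : Type*} [Fintype ι] {s : Finset ι}
    {x : EuclideanSpace ℝ ι} (hx : ∀ i ∉ s, x i = 0) (y : EuclideanSpace ℝ ι) :
    ⟪x, y⟫_ℝ = ∑ i ∈ s, x i * y i := by
  rw [PiLp.inner_apply, ← Finset.sum_subset (Finset.subset_univ s) fun i _ hi => by simp [hx i hi]]
  simp [mul_comm]

lemma abs_le_of_abs_mul_le_mul {β t d M : ℝ} (hd : 0 < d) (hβ : d ≤ β) (h : |β * t| ≤ d * M) :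
    |t| ≤ M := by
  rw [abs_mul, abs_of_nonneg (hd.le.trans hβ)] at h
  exact le_of_mul_le_mul_left ((mul_le_mul_of_nonneg_right hβ (abs_nonneg t)).trans h) hd

lemma third_row_bounds_of_inner_bounds {ε α b₀ b₁ c₀ c₁ c₂ : ℝ} (hε0 : 0 ≤ ε) (hε : ε < 1 / 12)
    (hα : 0 ≤ α) (hb₁ : 0 ≤ b₁) (hc₂ : 0 ≤ c₂) (ha : (1 - ε) ^ 2 ≤ α * α)
    (hb : (1 - ε) ^ 2 ≤ b₀ * b₀ + b₁ * b₁)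
    (hc : c₀ * c₀ + c₁ * c₁ + c₂ * c₂ ∈ Set.Icc ((1 - ε) ^ 2) ((1 + ε) ^ 2))
    (hab : |α * b₀| ≤ 7 / 2 * ε) (hac : |α * c₀| ≤ 7 / 2 * ε)
    (hbc : |b₀ * c₀ + b₁ * c₁| ≤ 7 / 2 * ε) :
    |c₀| ≤ 4 * ε ∧ |c₁| ≤ 6 * ε ∧ 1 - 4 * ε ≤ c₂ ∧ c₂ ≤ 1 + ε := by
  obtain ⟨hc, hc'⟩ := hc
  have hεε : ε ^ 2 ≤ ε / 12 := by nlinarith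
  have hα₁ : 1 - ε ≤ α := (mul_self_le_mul_self_iff (by linarith) hα).mpr (by linarith)
  have hα' : 7 / 2 * ε ≤ (1 - ε) * (4 * ε) := by linarith
  have hb₀ := abs_le_of_abs_mul_le_mul (by linarith) hα₁ (hab.trans hα')
  have hc₀ := abs_le_of_abs_mul_le_mul (by linarith) hα₁ (hac.trans hα')
  have hb₀c₀ : |b₀ * c₀| ≤ 16 * ε ^ 2 := by
    rw [abs_mul]
    nlinarith [mul_le_mul hb₀ hc₀ (abs_nonneg _) (by linarith)]
  have hb₁' : 5 / 6 ≤ b₁ := by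
    nlinarith [sq_le_sq' (abs_le.mp hb₀).1 (abs_le.mp hb₀).2]
  have hb₁c₁ : |b₁ * c₁| ≤ 5 / 6 * (6 * ε) :=
    calc |b₁ * c₁| = |(b₀ * c₀ + b₁ * c₁) - b₀ * c₀| := by ring_nf
      _ ≤ |b₀ * c₀ + b₁ * c₁| + |b₀ * c₀| := abs_sub _ _
      _ ≤ 5 / 6 * (6 * ε) := by linarith
  have hc₁ := abs_le_of_abs_mul_le_mul (by norm_num) hb₁' hb₁c₁
  refine ⟨hc₀, hc₁, (mul_self_le_mul_self_iff (by linarith) hc₂).mpr ?_,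
    (mul_self_le_mul_self_iff hc₂ (by linarith)).mpr (by nlinarith)⟩
  nlinarith [sq_le_sq' (abs_le.mp hc₀).1 (abs_le.mp hc₀).2,
    sq_le_sq' (abs_le.mp hc₁).1 (abs_le.mp hc₁).2]

/-- If `f 0 = 0`, `f` is an `ε`-isometry on `{0, e₁, e₂, e₃}` (`0 < ε < 1/12`)
with triangular form `f e₁ = (e′₁₁, 0, …)`, `f e₂ = (e′₂₁, e′₂₂, 0, …)`,
`f e₃ = (e′₃₁, e′₃₂, e′₃₃, 0, …)` and nonnegative diagonal entries, then
`|e′₃₁| ≤ 4ε`, `|e′₃₂| ≤ 6ε` and `1 − 4ε ≤ e′₃₃ ≤ 1 + ε`. -/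
theorem third_row_bounds (n : ℕ) (hn : 3 ≤ n) (ε : ℝ)
    (hε0 : 0 < ε) (hε : ε < 1 / 12)
    (f : EuclideanSpace ℝ (Fin n) → EuclideanSpace ℝ (Fin n))
    (hf0 : f 0 = 0)
    (hiso : ∀ x ∈ ({0, EuclideanSpace.single ⟨0, by omega⟩ (1 : ℝ),
              EuclideanSpace.single ⟨1, by omega⟩ (1 : ℝ),
              EuclideanSpace.single ⟨2, by omega⟩ (1 : ℝ)} :
              Set (EuclideanSpace ℝ (Fin n))),
            ∀ y ∈ ({0, EuclideanSpace.single ⟨0, by omega⟩ (1 : ℝ),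
              EuclideanSpace.single ⟨1, by omega⟩ (1 : ℝ),
              EuclideanSpace.single ⟨2, by omega⟩ (1 : ℝ)} :
              Set (EuclideanSpace ℝ (Fin n))),
            |‖f x - f y‖ - ‖x - y‖| ≤ ε)
    (htri1 : ∀ j : Fin n, j ≠ ⟨0, by omega⟩ →
      f (EuclideanSpace.single ⟨0, by omega⟩ (1 : ℝ)) j = 0)
    (htri2 : ∀ j : Fin n, j ≠ ⟨0, by omega⟩ → j ≠ ⟨1, by omega⟩ →
      f (EuclideanSpace.single ⟨1, by omega⟩ (1 : ℝ)) j = 0)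
    (htri3 : ∀ j : Fin n, j ≠ ⟨0, by omega⟩ → j ≠ ⟨1, by omega⟩ → j ≠ ⟨2, by omega⟩ →
      f (EuclideanSpace.single ⟨2, by omega⟩ (1 : ℝ)) j = 0)
    (hpos1 : 0 ≤ f (EuclideanSpace.single ⟨0, by omega⟩ (1 : ℝ)) ⟨0, by omega⟩)
    (hpos2 : 0 ≤ f (EuclideanSpace.single ⟨1, by omega⟩ (1 : ℝ)) ⟨1, by omega⟩)
    (hpos3 : 0 ≤ f (EuclideanSpace.single ⟨2, by omega⟩ (1 : ℝ)) ⟨2, by omega⟩) :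
    |f (EuclideanSpace.single ⟨2, by omega⟩ (1 : ℝ)) ⟨0, by omega⟩| ≤ 4 * ε ∧
    |f (EuclideanSpace.single ⟨2, by omega⟩ (1 : ℝ)) ⟨1, by omega⟩| ≤ 6 * ε ∧
    1 - 4 * ε ≤ f (EuclideanSpace.single ⟨2, by omega⟩ (1 : ℝ)) ⟨2, by omega⟩ ∧
    f (EuclideanSpace.single ⟨2, by omega⟩ (1 : ℝ)) ⟨2, by omega⟩ ≤ 1 + ε := by
  set i₀ : Fin n := ⟨0, by omega⟩
  set i₁ : Fin n := ⟨1, by omega⟩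
  set i₂ : Fin n := ⟨2, by omega⟩
  have h01 : i₀ ≠ i₁ := by simp [i₀, i₁, Fin.ext_iff]
  have h02 : i₀ ≠ i₂ := by simp [i₀, i₂, Fin.ext_iff]
  have h12 : i₁ ≠ i₂ := by simp [i₁, i₂, Fin.ext_iff]
  have he := EuclideanSpace.orthonormal_single (𝕜 := ℝ) (ι := Fin n)
  have hnorm (i : Fin n) := abs_norm_apply_sub_one_le he (Set.mem_insert _ _) hf0 hiso (i := i)
  have hsq (i : Fin n) hi := sq_inner_self_mem_Icc_of_abs_norm_sub_one_le (by linarith) (hnorm i hi)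
  have hinner (i j : Fin n) :=
    abs_real_inner_apply_le he (Set.mem_insert _ _) hf0 hiso hε0.le (by linarith) (i := i) (j := j)
  set a := f (EuclideanSpace.single i₀ 1)
  set b := f (EuclideanSpace.single i₁ 1)
  set c := f (EuclideanSpace.single i₂ 1)
  have ha (y : EuclideanSpace ℝ (Fin n)) : ⟪a, y⟫_ℝ = a i₀ * y i₀ := by
    simpa using EuclideanSpace.inner_eq_sum_of_support_subset (s := {i₀}) (by simpa using htri1) y
  have hb (y : EuclideanSpace ℝ (Fin n)) : ⟪b, y⟫_ℝ = b i₀ * y i₀ + b i₁ * y i₁ := by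
    rw [EuclideanSpace.inner_eq_sum_of_support_subset (s := {i₀, i₁}) (by simpa using htri2) y,
      Finset.sum_pair h01]
  have hc (y : EuclideanSpace ℝ (Fin n)) :
      ⟪c, y⟫_ℝ = c i₀ * y i₀ + c i₁ * y i₁ + c i₂ * y i₂ := by
    rw [EuclideanSpace.inner_eq_sum_of_support_subset (s := {i₀, i₁, i₂}) (by simpa using htri3) y,
      Finset.sum_insert (by simp [h01, h02]), Finset.sum_pair h12, add_assoc]
  exact third_row_bounds_of_inner_bounds hε0.le hε hpos1 hpos2 hpos3
    (ha a ▸ (hsq i₀ (by simp)).1) (hb b ▸ (hsq i₁ (by simp)).1) (hc c ▸ hsq i₂ (by simp))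
    (ha b ▸ hinner i₀ i₁ h01 (by simp) (by simp)) (ha c ▸ hinner i₀ i₂ h02 (by simp) (by simp))
    (hb c ▸ hinner i₁ i₂ h12 (by simp) (by simp))
end
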